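/- arXiv:2603.23628 — 2 statements merged into one kernel-verified Lean document; each statement's English description precedes it below -/
import Mathlib

section
/- Fix integers d ≥ 2, N ≥ 1, K ≥ 1, and let V((a',b',b), a) := sqrt(d_S^N / d_S^{N+K}) · Π_sym^{(N+K)}((a',b'),(a,b)) as a matrix with rows indexed by triples (a',b',b) and columns by a, where a,a' : Fin N → Fin d and b,b' : Fin K → Fin d. Then for every complex matrix ρ on (Fin N → Fin d) and all b₁,b₂ : Fin K → Fin d, the partial trace of V ρ V† over the first two registers satisfies ∑_{a',b'} (V ρ V†)((a',b',b₁),(a',b',b₂)) = (d_S^N / d_S^{N+K}) · (Tr_I[Π_sym^{(N+K)} (ρᵀ ⊗ I)])(b₁,b₂), where ρᵀ is the entrywise transpose, I is the identity on (Fin K → Fin d), and Tr_I(M)(b₁,b₂) := ∑_a M((a,b₁),(a,b₂)). That is, tracing out the first two registers of the Stinespring dilation yields the optimal N→K pure-state transposition channel T_CP(ρ) = (d_S^N / d_S^{N+K}) Tr_I[Π_sym^{(N+K)} (ρᵀ ⊗ I)]. -/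
open Matrix Kronecker BigOperators ComplexOrder

noncomputable section

/-- The matrix of the permutation `π ∈ S_M` acting on the `M` tensor factors of `(ℂ^d)^{⊗M}`. -/
def permMat (d M : ℕ) (π : Equiv.Perm (Fin M)) :
    Matrix (Fin M → Fin d) (Fin M → Fin d) ℂ :=
  Matrix.of fun x y => if x = y ∘ π.symm then 1 else 0

/-- The orthogonal projector onto the symmetric subspace of `(ℂ^d)^{⊗M}`. -/
def symProj (d M : ℕ) : Matrix (Fin M → Fin d) (Fin M → Fin d) ℂ :=
  ((M.factorial : ℂ))⁻¹ • ∑ π : Equiv.Perm (Fin M), permMat d M π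


lemma permMat_mul_apply (d M : ℕ) (π σ : Equiv.Perm (Fin M)) (x y : Fin M → Fin d) :
    ∑ z, permMat d M π x z * permMat d M σ z y = permMat d M (π * σ) x y := by
  have hcomp : (y ∘ ⇑σ.symm) ∘ ⇑π.symm = y ∘ ⇑(π * σ).symm := by
    funext i
    rfl
  simp only [permMat, Matrix.of_apply]
  rw [Finset.sum_eq_single (y ∘ σ.symm)]
  · rw [if_pos rfl, mul_one, hcomp]
  · intro z _ hz
    rw [if_neg hz, mul_zero]
  · intro h
    exact absurd (Finset.mem_univ _) h

lemma symProj_sq (d M : ℕ) (x y : Fin M → Fin d) :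
    ∑ z, symProj d M x z * symProj d M z y = symProj d M x y := by
  have hM : (M.factorial : ℂ) ≠ 0 := Nat.cast_ne_zero.2 (Nat.factorial_ne_zero M)
  simp only [symProj, Matrix.smul_apply, Matrix.sum_apply, smul_eq_mul]
  have key : ∑ z, (∑ π : Equiv.Perm (Fin M), permMat d M π x z) *
      (∑ σ : Equiv.Perm (Fin M), permMat d M σ z y)
      = (M.factorial : ℂ) * ∑ τ : Equiv.Perm (Fin M), permMat d M τ x y := by
    simp only [Finset.sum_mul_sum]
    rw [Finset.sum_comm]
    have hπ : ∀ π : Equiv.Perm (Fin M),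
        ∑ z, ∑ σ : Equiv.Perm (Fin M), permMat d M π x z * permMat d M σ z y
        = ∑ τ : Equiv.Perm (Fin M), permMat d M τ x y := by
      intro π
      rw [Finset.sum_comm]
      rw [Finset.sum_congr rfl fun σ _ => permMat_mul_apply d M π σ x y]
      exact Equiv.sum_comp (Equiv.mulLeft π) fun τ => permMat d M τ x y
    rw [Finset.sum_congr rfl fun π _ => hπ π, Finset.sum_const, Finset.card_univ,
      nsmul_eq_mul]
    simp [Fintype.card_perm]
  have expand : ∑ z, ((M.factorial : ℂ)⁻¹ * ∑ π : Equiv.Perm (Fin M), permMat d M π x z) *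
      ((M.factorial : ℂ)⁻¹ * ∑ σ : Equiv.Perm (Fin M), permMat d M σ z y)
      = (M.factorial : ℂ)⁻¹ * (M.factorial : ℂ)⁻¹ *
        ∑ z, (∑ π : Equiv.Perm (Fin M), permMat d M π x z) *
          (∑ σ : Equiv.Perm (Fin M), permMat d M σ z y) := by
    rw [Finset.mul_sum]
    exact Finset.sum_congr rfl fun z _ => by ring
  rw [expand, key]
  field_simp

lemma symProj_symm (d M : ℕ) (x y : Fin M → Fin d) :
    symProj d M x y = symProj d M y x := by
  simp only [symProj, Matrix.smul_apply, Matrix.sum_apply, smul_eq_mul]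
  congr 1
  rw [← Equiv.sum_comp (Equiv.inv (Equiv.Perm (Fin M)))]
  refine Finset.sum_congr rfl fun π _ => ?_
  simp only [permMat, Matrix.of_apply, Equiv.inv_apply]
  congr 1
  simp only [eq_iff_iff]
  constructor
  · intro h; funext i; rw [h]; simp [Equiv.Perm.inv_def]
  · intro h; funext i; rw [h]; simp [Equiv.Perm.inv_def]

lemma symProj_real (d M : ℕ) (x y : Fin M → Fin d) :
    (starRingEnd ℂ) (symProj d M x y) = symProj d M x y := by
  simp [symProj, Matrix.smul_apply, Matrix.sum_apply, permMat, apply_ite, map_sum]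

/-- The dimension `d_S^M = binom(M+d-1, d-1)` of the symmetric subspace of `(ℂ^d)^{⊗M}`. -/
def dS (d M : ℕ) : ℕ := (M + d - 1).choose (d - 1)

/-- Regard a pair of tuples as a single tuple via `Fin (N+K) ≃ Fin N ⊕ Fin K`. -/
def pairToFun (d N K : ℕ) (x : Fin N → Fin d) (o : Fin K → Fin d) :
    Fin (N + K) → Fin d :=
  fun i => Sum.elim x o (finSumFinEquiv.symm i)

/-- The projector onto the symmetric subspace of `(ℂ^d)^{⊗(N+K)}`, regarded as a matrix
indexed by pairs `((x,o),(x',o'))`. -/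
def symProjNK (d N K : ℕ) :
    Matrix ((Fin N → Fin d) × (Fin K → Fin d)) ((Fin N → Fin d) × (Fin K → Fin d)) ℂ :=
  Matrix.of fun p q =>
    symProj d (N + K) (pairToFun d N K p.1 p.2) (pairToFun d N K q.1 q.2)

/-- Partial trace over the output (second) factor. -/
def trOut {d N K : ℕ}
    (J : Matrix ((Fin N → Fin d) × (Fin K → Fin d)) ((Fin N → Fin d) × (Fin K → Fin d)) ℂ) :
    Matrix (Fin N → Fin d) (Fin N → Fin d) ℂ :=
  Matrix.of fun x x' => ∑ o : Fin K → Fin d, J (x, o) (x', o)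

/-- The Stinespring isometry `V((a',b',b), a) = sqrt(d_S^N/d_S^{N+K}) Π_sym^{(N+K)}((a',b'),(a,b))`
realising simultaneously optimal `N→K` transposition and optimal `N→N+K` cloning. -/
def stIso (d N K : ℕ) :
    Matrix ((Fin N → Fin d) × (Fin K → Fin d) × (Fin K → Fin d)) (Fin N → Fin d) ℂ :=
  Matrix.of fun p a =>
    (Real.sqrt ((dS d N : ℝ) / (dS d (N + K) : ℝ)) : ℂ) *
      symProjNK d N K (p.1, p.2.1) (a, p.2.2)


/-- The canonical equivalence between pairs of tuples and tuples on `Fin (N+K)`. -/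
def pairEquiv (d N K : ℕ) : (Fin N → Fin d) × (Fin K → Fin d) ≃ (Fin (N + K) → Fin d) :=
  (Equiv.sumArrowEquivProdArrow (Fin N) (Fin K) (Fin d)).symm.trans
    (Equiv.arrowCongr finSumFinEquiv (Equiv.refl (Fin d)))

lemma pairEquiv_apply (d N K : ℕ) (p : (Fin N → Fin d) × (Fin K → Fin d)) :
    pairEquiv d N K p = pairToFun d N K p.1 p.2 := rfl

lemma symProjNK_sq (d N K : ℕ) (q r : (Fin N → Fin d) × (Fin K → Fin d)) :
    ∑ p, symProjNK d N K q p * symProjNK d N K p r = symProjNK d N K q r := by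
  have h := Equiv.sum_comp (pairEquiv d N K)
    (fun z => symProj d (N + K) (pairToFun d N K q.1 q.2) z *
      symProj d (N + K) z (pairToFun d N K r.1 r.2))
  simp only [symProjNK, Matrix.of_apply]
  rw [show (∑ p : (Fin N → Fin d) × (Fin K → Fin d),
      symProj d (N + K) (pairToFun d N K q.1 q.2) (pairToFun d N K p.1 p.2) *
        symProj d (N + K) (pairToFun d N K p.1 p.2) (pairToFun d N K r.1 r.2)) =
      ∑ z, symProj d (N + K) (pairToFun d N K q.1 q.2) z *
        symProj d (N + K) z (pairToFun d N K r.1 r.2) from h]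
  exact symProj_sq d (N + K) _ _

lemma symProjNK_symm (d N K : ℕ) (p q : (Fin N → Fin d) × (Fin K → Fin d)) :
    symProjNK d N K p q = symProjNK d N K q p :=
  symProj_symm d (N + K) _ _

lemma symProjNK_star (d N K : ℕ) (p q : (Fin N → Fin d) × (Fin K → Fin d)) :
    star (symProjNK d N K p q) = symProjNK d N K p q :=
  symProj_real d (N + K) _ _

lemma sum_swap4 {A B C D : Type*} [Fintype A] [Fintype B] [Fintype C] [Fintype D]
    (F : A → B → C → D → ℂ) :
    ∑ a, ∑ b, ∑ c, ∑ e, F a b c e = ∑ c, ∑ e, ∑ a, ∑ b, F a b c e := by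
  have e1 : ∑ p : A × B, ∑ q : C × D, F p.1 p.2 q.1 q.2
      = ∑ a, ∑ b, ∑ c, ∑ e, F a b c e := by
    rw [Fintype.sum_prod_type]
    exact Finset.sum_congr rfl fun a _ => Finset.sum_congr rfl fun b _ => by
      rw [Fintype.sum_prod_type]
  have e2 : ∑ q : C × D, ∑ p : A × B, F p.1 p.2 q.1 q.2
      = ∑ c, ∑ e, ∑ a, ∑ b, F a b c e := by
    rw [Fintype.sum_prod_type]
    exact Finset.sum_congr rfl fun c _ => Finset.sum_congr rfl fun e _ => by
      rw [Fintype.sum_prod_type]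
  rw [← e1, ← e2, Finset.sum_comm]

/-- Tracing out the first two registers of the Stinespring dilation `V ρ V†` yields the
optimal `N→K` pure-state transposition channel
`T_CP(ρ) = (d_S^N/d_S^{N+K}) Tr_I[Π_sym^{(N+K)} (ρᵀ ⊗ 1)]`. -/
theorem stmt5 (d N K : ℕ) (hd : 2 ≤ d) (hN : 1 ≤ N) (hK : 1 ≤ K)
    (ρ : Matrix (Fin N → Fin d) (Fin N → Fin d) ℂ) (b₁ b₂ : Fin K → Fin d) :
    (∑ a' : Fin N → Fin d, ∑ b' : Fin K → Fin d,
        (stIso d N K * ρ * (stIso d N K)ᴴ) (a', b', b₁) (a', b', b₂)) =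
      ((dS d N : ℂ) / (dS d (N + K) : ℂ)) *
        ∑ a : Fin N → Fin d,
          (symProjNK d N K *
            (ρᵀ ⊗ₖ (1 : Matrix (Fin K → Fin d) (Fin K → Fin d) ℂ))) (a, b₁) (a, b₂) := by
  set c : ℂ := (Real.sqrt ((dS d N : ℝ) / (dS d (N + K) : ℝ)) : ℂ) with hc
  set P := symProjNK d N K with hP
  have hc2 : c * c = (dS d N : ℂ) / (dS d (N + K) : ℂ) := by
    rw [hc, ← Complex.ofReal_mul, Real.mul_self_sqrt (by positivity)]
    push_cast
    ring
  have hcstar : star c = c := Complex.conj_ofReal _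
  have key : ∀ i j : Fin N → Fin d,
      ∑ a' : Fin N → Fin d, ∑ b' : Fin K → Fin d,
        P (a', b') (i, b₁) * P (a', b') (j, b₂) = P (i, b₁) (j, b₂) := by
    intro i j
    have h := symProjNK_sq d N K (i, b₁) (j, b₂)
    rw [Fintype.sum_prod_type] at h
    simp only [hP]
    rw [← h]
    exact Finset.sum_congr rfl fun a' _ => Finset.sum_congr rfl fun b' _ => by
      rw [symProjNK_symm d N K (a', b') (i, b₁)]
  have hVV : ∀ (a' : Fin N → Fin d) (b' : Fin K → Fin d),
      (stIso d N K * ρ * (stIso d N K)ᴴ) (a', b', b₁) (a', b', b₂)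
      = ∑ i : Fin N → Fin d, ∑ j : Fin N → Fin d,
          (c * c) * (ρ i j * (P (a', b') (i, b₁) * P (a', b') (j, b₂))) := by
    intro a' b'
    simp only [Matrix.mul_apply, Matrix.conjTranspose_apply, stIso, Matrix.of_apply]
    simp only [Finset.sum_mul]
    rw [Finset.sum_comm]
    refine Finset.sum_congr rfl fun i _ => Finset.sum_congr rfl fun j _ => ?_
    rw [star_mul', hcstar, symProjNK_star]
    ring
  have hR : ∀ a : Fin N → Fin d,
      (symProjNK d N K * (ρᵀ ⊗ₖ (1 : Matrix (Fin K → Fin d) (Fin K → Fin d) ℂ))) (a, b₁) (a, b₂)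
      = ∑ j : Fin N → Fin d, ρ a j * P (a, b₁) (j, b₂) := by
    intro a
    rw [Matrix.mul_apply, Fintype.sum_prod_type]
    refine Finset.sum_congr rfl fun j _ => ?_
    simp only [Matrix.kroneckerMap_apply, Matrix.transpose_apply]
    rw [Finset.sum_eq_single b₂]
    · simp only [Matrix.one_apply_eq, mul_one]
      ring
    · intro p₂ _ h
      simp [Matrix.one_apply, h]
    · intro h
      exact absurd (Finset.mem_univ _) h
  calc (∑ a' : Fin N → Fin d, ∑ b' : Fin K → Fin d,
        (stIso d N K * ρ * (stIso d N K)ᴴ) (a', b', b₁) (a', b', b₂))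
      = ∑ a' : Fin N → Fin d, ∑ b' : Fin K → Fin d, ∑ i : Fin N → Fin d, ∑ j : Fin N → Fin d,
          (c * c) * (ρ i j * (P (a', b') (i, b₁) * P (a', b') (j, b₂))) := by
        exact Finset.sum_congr rfl fun a' _ => Finset.sum_congr rfl fun b' _ => hVV a' b'
    _ = ∑ i : Fin N → Fin d, ∑ j : Fin N → Fin d, ∑ a' : Fin N → Fin d, ∑ b' : Fin K → Fin d,
          (c * c) * (ρ i j * (P (a', b') (i, b₁) * P (a', b') (j, b₂))) := sum_swap4 _
    _ = ∑ i : Fin N → Fin d, ∑ j : Fin N → Fin d,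
          (c * c) * (ρ i j * P (i, b₁) (j, b₂)) := by
        refine Finset.sum_congr rfl fun i _ => Finset.sum_congr rfl fun j _ => ?_
        simp only [← Finset.mul_sum]
        rw [key i j]
    _ = (c * c) * ∑ i : Fin N → Fin d, ∑ j : Fin N → Fin d,
          ρ i j * P (i, b₁) (j, b₂) := by
        simp only [← Finset.mul_sum]
    _ = ((dS d N : ℂ) / (dS d (N + K) : ℂ)) *
          ∑ a : Fin N → Fin d,
            (symProjNK d N K *
              (ρᵀ ⊗ₖ (1 : Matrix (Fin K → Fin d) (Fin K → Fin d) ℂ))) (a, b₁) (a, b₂) := by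
        rw [hc2]
        congr 1
        exact Finset.sum_congr rfl fun a _ => (hR a).symm


end
end

section
/- Fix integers d ≥ 2, N ≥ 1, K ≥ 1, and let V((a',b',b), a) := sqrt(d_S^N / d_S^{N+K}) · Π_sym^{(N+K)}((a',b'),(a,b)) as a matrix with rows indexed by triples (a',b',b) and columns by a, where a,a' : Fin N → Fin d and b,b' : Fin K → Fin d. Then for every complex matrix ρ on (Fin N → Fin d), the partial trace of V ρ V† over the last register satisfies ∑_b (V ρ V†)((a'₁,b'₁,b),(a'₂,b'₂,b)) = (d_S^N / d_S^{N+K}) · (Π_sym^{(N+K)} (ρ ⊗ I) Π_sym^{(N+K)})((a'₁,b'₁),(a'₂,b'₂)), where I is the identity on (Fin K → Fin d). That is, tracing out the last register of the Stinespring dilation yields Werner's optimal universal symmetric N→N+K cloning channel W_CP(ρ) = (d_S^N / d_S^{N+K}) Π_sym^{(N+K)} (ρ ⊗ I) Π_sym^{(N+K)}; together with the complementary trace this shows optimal cloning and optimal transposition are complementary channels. -/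
/-!
Up to the scalar `√(d_S^N / d_S^{N+K})`, `V` sends `|a⟩` to `∑_b Π(|a⟩ ⊗ |b⟩) ⊗ |b⟩`, so tracing out
the copy of `b` turns `V ρ V†` into `Π (ρ ⊗ 1) Π†`. Finally `Π† = Π`, since `R(π)† = R(π⁻¹)`
and the average defining `Π` runs over the whole group.
-/

open Matrix Kronecker BigOperators ComplexOrder

noncomputable section

section Dilation

variable {R α β : Type*} [CommSemiring R] [StarRing R] [Fintype α] [Fintype β] [DecidableEq β]

def dilationOf (P : Matrix (α × β) (α × β) R) : Matrix (α × β × β) α R :=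
  Matrix.of fun p a => P (p.1, p.2.1) (a, p.2.2)

theorem sum_dilationOf_mul_mul_conjTranspose_apply (P : Matrix (α × β) (α × β) R)
    (ρ : Matrix α α R) (x x' : α) (y y' : β) :
    ∑ b, (dilationOf P * ρ * (dilationOf P)ᴴ) (x, y, b) (x', y', b) =
      (P * (ρ ⊗ₖ (1 : Matrix β β R)) * Pᴴ) (x, y) (x', y') := by
  simp only [dilationOf, mul_apply, conjTranspose_apply, of_apply, kroneckerMap_apply,
    one_apply, mul_ite, mul_one, mul_zero, Fintype.sum_prod_type, Finset.sum_mul,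
    Finset.sum_ite_eq', Finset.mem_univ, if_true]
  exact Finset.sum_comm

end Dilation

theorem permMat_conjTranspose (d M : ℕ) (π : Equiv.Perm (Fin M)) :
    (permMat d M π)ᴴ = permMat d M π⁻¹ := by
  ext x y
  have hswap : y = x ∘ π.symm ↔ x = y ∘ π := by
    constructor <;> rintro rfl <;> ext i <;> simp
  simp only [conjTranspose_apply, permMat, of_apply, Equiv.Perm.inv_def, Equiv.symm_symm,
    hswap]
  split <;> simp

theorem symProj_isHermitian (d M : ℕ) : (symProj d M).IsHermitian := by
  rw [IsHermitian, symProj, conjTranspose_smul, conjTranspose_sum]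
  simp only [permMat_conjTranspose, star_inv₀, star_natCast]
  congr 1
  exact Equiv.sum_comp (Equiv.inv _) (permMat d M)

theorem symProjNK_isHermitian (d N K : ℕ) : (symProjNK d N K).IsHermitian := by
  ext p q
  exact (symProj_isHermitian d (N + K)).apply _ _

theorem stIso_eq_smul_dilationOf (d N K : ℕ) :
    stIso d N K =
      (Real.sqrt ((dS d N : ℝ) / (dS d (N + K) : ℝ)) : ℂ) • dilationOf (symProjNK d N K) :=
  rfl

theorem stmt6_general (d N K : ℕ)
    (ρ : Matrix (Fin N → Fin d) (Fin N → Fin d) ℂ)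
    (a'₁ a'₂ : Fin N → Fin d) (b'₁ b'₂ : Fin K → Fin d) :
    (∑ b : Fin K → Fin d,
        (stIso d N K * ρ * (stIso d N K)ᴴ) (a'₁, b'₁, b) (a'₂, b'₂, b)) =
      ((dS d N : ℂ) / (dS d (N + K) : ℂ)) *
        (symProjNK d N K * (ρ ⊗ₖ (1 : Matrix (Fin K → Fin d) (Fin K → Fin d) ℂ)) *
          symProjNK d N K) (a'₁, b'₁) (a'₂, b'₂) := by
  set c : ℝ := Real.sqrt ((dS d N : ℝ) / (dS d (N + K) : ℝ))
  have hc : (c : ℂ) * star (c : ℂ) = (dS d N : ℂ) / (dS d (N + K) : ℂ) := by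
    rw [Complex.star_def, Complex.conj_ofReal, ← Complex.ofReal_mul,
      Real.mul_self_sqrt (by positivity)]
    push_cast
    rfl
  have hV : stIso d N K * ρ * (stIso d N K)ᴴ =
      ((c : ℂ) * star (c : ℂ)) • (dilationOf (symProjNK d N K) * ρ *
        (dilationOf (symProjNK d N K))ᴴ) := by
    rw [stIso_eq_smul_dilationOf, conjTranspose_smul, smul_mul, smul_mul, Matrix.mul_smul,
      smul_smul]
  simp only [hV, Matrix.smul_apply, smul_eq_mul, ← Finset.mul_sum, hc,
    sum_dilationOf_mul_mul_conjTranspose_apply, (symProjNK_isHermitian d N K).eq]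

/-- Tracing out the last register of the Stinespring dilation `V ρ V†` yields Werner's
optimal universal symmetric `N→N+K` cloning channel
`W_CP(ρ) = (d_S^N/d_S^{N+K}) Π_sym^{(N+K)} (ρ ⊗ 1) Π_sym^{(N+K)}`. -/
theorem stmt6 (d N K : ℕ) (hd : 2 ≤ d) (hN : 1 ≤ N) (hK : 1 ≤ K)
    (ρ : Matrix (Fin N → Fin d) (Fin N → Fin d) ℂ)
    (a'₁ a'₂ : Fin N → Fin d) (b'₁ b'₂ : Fin K → Fin d) :
    (∑ b : Fin K → Fin d,
        (stIso d N K * ρ * (stIso d N K)ᴴ) (a'₁, b'₁, b) (a'₂, b'₂, b)) =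
      ((dS d N : ℂ) / (dS d (N + K) : ℂ)) *
        (symProjNK d N K * (ρ ⊗ₖ (1 : Matrix (Fin K → Fin d) (Fin K → Fin d) ℂ)) *
          symProjNK d N K) (a'₁, b'₁) (a'₂, b'₂) :=
  stmt6_general d N K ρ a'₁ a'₂ b'₁ b'₂

end
end
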